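/- There are constants c, n₀ > 0 such that for all integers N ≥ n₀, all t ∈ (0,1) and all m ≥ √(2N)(1 − t N^{−1/3}), taking a = N^{−1/6} one has e^{−2am} ∑_{n=0}^{N−1} ∫_ℝ e^{2ax} φ_n(x)² dx ≤ c N^{2/3}. (This quantity is an upper bound for the trace norm of the operator K_N ϱ_m K_N, where K_N is the Hermite kernel ∑_{n<N} φ_n(x)φ_n(y) and ϱ_m f(x) = f(2m − x).) -/

import Mathlib

open Real MeasureTheory

/-- Physicists' Hermite polynomials: H₀ = 1, H₁ = 2x, H_{n+2} = 2x H_{n+1} − 2(n+1) H_n. -/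
noncomputable def physHermite : ℕ → ℝ → ℝ
  | 0, _ => 1
  | 1, x => 2 * x
  | n + 2, x => 2 * x * physHermite (n + 1) x - 2 * ((n : ℝ) + 1) * physHermite n x

/-- The n-th Hermite function (harmonic oscillator wave function)
φₙ(x) = (2ⁿ n! √π)^{−1/2} Hₙ(x) e^{−x²/2}. -/
noncomputable def hermiteFn (n : ℕ) (x : ℝ) : ℝ :=
  ((2 : ℝ) ^ n * Nat.factorial n * Real.sqrt Real.pi) ^ (-(1 : ℝ) / 2) *
    physHermite n x * Real.exp (-x ^ 2 / 2)

/-!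
Shifting the argument, `H_n(x + a) = ∑ₖ C(n,k) (2a)^(n-k) H_k(x)`, so after completing the
square the orthogonality of the `H_k` with respect to `e^(-x²)` gives the closed form
`∫ e^(2ax) φ_n(x)² dx = e^(a²) ∑_{j ≤ n} C(n,j) (2a²)^j / j!`.
Summing over `n < N` with the hockey-stick identity and using `(2j+1)! ≤ 4^j j! (j+1)!`, the total
is at most `e^(a²) (N / z) e^z` with `z = 2a√(2N)`. For `a = N^(-1/6)` the hypothesis on `m`
keeps `e^(z - 2am)` bounded, and `N / z` is of order `N^(2/3)`.
-/

open Finset Nat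

-- At `n = 0` the truncated index `n - 1 = 0` is harmless: its coefficient `2n` vanishes.
theorem physHermite_succ (n : ℕ) (x : ℝ) :
    physHermite (n + 1) x = 2 * x * physHermite n x - 2 * n * physHermite (n - 1) x := by
  cases n with
  | zero => simp [physHermite]
  | succ n => simp only [physHermite]; push_cast; ring

theorem hasDerivAt_physHermite (n : ℕ) (x : ℝ) :
    HasDerivAt (physHermite n) (2 * n * physHermite (n - 1) x) x := by
  induction n using Nat.twoStepInduction generalizing x with
  | zero => exact (hasDerivAt_const x (1 : ℝ)).congr_deriv (by simp)
  | one => exact ((hasDerivAt_id x).const_mul (2 : ℝ)).congr_deriv (by simp [physHermite])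
  | more n ih₀ ih₁ =>
    refine ((((hasDerivAt_id x).const_mul 2).mul (ih₁ x)).sub
      ((ih₀ x).const_mul (2 * ((n : ℝ) + 1)))).congr_deriv ?_
    simp only [id, show n + 2 - 1 = n + 1 by omega, Nat.add_sub_cancel, physHermite_succ n x]
    push_cast; ring

open Polynomial in
theorem exists_eval_eq_physHermite (n : ℕ) :
    ∃ p : ℝ[X], ∀ x, p.eval x = physHermite n x := by
  induction n using Nat.twoStepInduction with
  | zero => exact ⟨C 1, fun x => by simp [physHermite]⟩
  | one => exact ⟨C 2 * X, fun x => by simp [physHermite]⟩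
  | more n ih₀ ih₁ =>
    obtain ⟨p, hp⟩ := ih₀
    obtain ⟨q, hq⟩ := ih₁
    exact ⟨C 2 * X * q - C (2 * ((n : ℝ) + 1)) * p, fun x => by simp [physHermite, hp, hq]⟩

theorem integrable_pow_mul_exp_neg_sq (k : ℕ) :
    Integrable fun x : ℝ => x ^ k * exp (-x ^ 2) := by
  simpa [rpow_natCast] using
    integrable_rpow_mul_exp_neg_mul_sq one_pos (s := k) (by linarith [k.cast_nonneg (α := ℝ)])

open Polynomial in
theorem integrable_eval_mul_exp_neg_sq (p : ℝ[X]) :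
    Integrable fun x : ℝ => p.eval x * exp (-x ^ 2) := by
  simp_rw [eval_eq_sum_range, Finset.sum_mul, mul_assoc]
  exact integrable_finsetSum _ fun k _ => (integrable_pow_mul_exp_neg_sq k).const_mul _

theorem integrable_physHermite_mul_physHermite_mul_exp (j k : ℕ) :
    Integrable fun x : ℝ => physHermite j x * physHermite k x * exp (-x ^ 2) := by
  obtain ⟨p, hp⟩ := exists_eval_eq_physHermite j
  obtain ⟨q, hq⟩ := exists_eval_eq_physHermite k
  simpa [hp, hq] using integrable_eval_mul_exp_neg_sq (p * q)

theorem hasDerivAt_sum_choose_mul_two_mul_pow (v : ℕ → ℝ) (n : ℕ) (b : ℝ) :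
    HasDerivAt
      (fun b => ∑ k ∈ range (n + 2), ((n + 1).choose k : ℝ) * (2 * b) ^ (n + 1 - k) * v k)
      (2 * (n + 1) * ∑ k ∈ range (n + 1), (n.choose k : ℝ) * (2 * b) ^ (n - k) * v k) b := by
  have hterm : ∀ k ∈ range (n + 2), HasDerivAt
      (fun b => ((n + 1).choose k : ℝ) * (2 * b) ^ (n + 1 - k) * v k)
      (((n + 1).choose k : ℝ) * (↑(n + 1 - k) * (2 * b) ^ (n + 1 - k - 1) * (2 * 1)) * v k) b :=
    fun k _ => ((((hasDerivAt_id b).const_mul 2).pow _).const_mul _).mul_const _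
  refine (HasDerivAt.fun_sum hterm).congr_deriv ?_
  simp only [sum_range_succ _ (n + 1), Nat.sub_self, Nat.cast_zero, zero_mul, mul_zero, add_zero,
    mul_sum]
  refine sum_congr rfl fun k hk => ?_
  have hkn : k ≤ n := Nat.lt_succ_iff.mp (mem_range.mp hk)
  have hchoose : ((n + 1).choose k : ℝ) * ↑(n + 1 - k) = (n.choose k : ℝ) * (n + 1) := by
    exact_mod_cast (Nat.choose_mul_succ_eq n k).symm
  rw [show n + 1 - k - 1 = n - k by omega]
  linear_combination (2 * (2 * b) ^ (n - k) * v k) * hchoose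

theorem physHermite_add (n : ℕ) (x a : ℝ) :
    physHermite n (x + a) =
      ∑ k ∈ range (n + 1), n.choose k * (2 * a) ^ (n - k) * physHermite k x := by
  induction n generalizing a with
  | zero => simp [physHermite]
  | succ n ih =>
    -- Both sides have `a`-derivative `2(n+1)` times the corresponding sides for `n`,
    -- and they agree at `a = 0`.
    have hderiv : ∀ b, HasDerivAt (fun b => physHermite (n + 1) (x + b) -
        ∑ k ∈ range (n + 2), ((n + 1).choose k : ℝ) * (2 * b) ^ (n + 1 - k) * physHermite k x)
        0 b := by
      intro b
      have h := ((hasDerivAt_physHermite (n + 1) (x + b)).comp b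
        ((hasDerivAt_id b).const_add x)).sub
        (hasDerivAt_sum_choose_mul_two_mul_pow (physHermite · x) n b)
      refine h.congr_deriv ?_
      rw [← ih b]
      simp
    have hconst := is_const_of_deriv_eq_zero (fun b => (hderiv b).differentiableAt)
      (fun b => (hderiv b).deriv) a 0
    have hzero : ∑ k ∈ range (n + 2),
        ((n + 1).choose k : ℝ) * (2 * 0) ^ (n + 1 - k) * physHermite k x =
          physHermite (n + 1) x := by
      rw [sum_range_succ, sum_eq_zero fun k hk => by
        rw [mul_zero, zero_pow (by have := mem_range.mp hk; omega), mul_zero, zero_mul]]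
      simp
    simpa only [hzero, add_zero, sub_self, sub_eq_zero] using hconst

theorem integral_physHermite_succ_mul (j k : ℕ) :
    ∫ x, physHermite (j + 1) x * physHermite k x * exp (-x ^ 2) =
      2 * k * ∫ x, physHermite j x * physHermite (k - 1) x * exp (-x ^ 2) := by
  -- By the recurrence, `(H_j H_k e^(-x²))' = 2k H_j H_(k-1) e^(-x²) - H_(j+1) H_k e^(-x²)`,
  -- and this derivative integrates to `0`.
  have hderiv : ∀ x, HasDerivAt (fun x => physHermite j x * physHermite k x * exp (-x ^ 2))
      (2 * k * (physHermite j x * physHermite (k - 1) x * exp (-x ^ 2)) -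
        physHermite (j + 1) x * physHermite k x * exp (-x ^ 2)) x := fun x =>
    (((hasDerivAt_physHermite j x).mul (hasDerivAt_physHermite k x)).mul
      (hasDerivAt_pow 2 x).neg.exp).congr_deriv (by
      simp only [Pi.mul_apply, Pi.neg_apply, physHermite_succ j x]; ring)
  have h := integral_eq_zero_of_hasDerivAt_of_integrable hderiv
    (((integrable_physHermite_mul_physHermite_mul_exp j (k - 1)).const_mul _).sub
      (integrable_physHermite_mul_physHermite_mul_exp (j + 1) k))
    (integrable_physHermite_mul_physHermite_mul_exp j k)
  rw [integral_sub ((integrable_physHermite_mul_physHermite_mul_exp j (k - 1)).const_mul _)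
    (integrable_physHermite_mul_physHermite_mul_exp (j + 1) k), integral_const_mul] at h
  linarith

theorem integral_physHermite_mul_physHermite (j k : ℕ) :
    ∫ x, physHermite j x * physHermite k x * exp (-x ^ 2) =
      if j = k then 2 ^ k * k ! * √π else 0 := by
  induction j generalizing k with
  | zero =>
    cases k with
    | zero => simpa [physHermite] using integral_gaussian 1
    | succ k =>
      simp_rw [mul_comm (physHermite 0 _)]
      simp [integral_physHermite_succ_mul]
  | succ j ih =>
    cases k with
    | zero => simp [integral_physHermite_succ_mul]
    | succ k =>
      rw [integral_physHermite_succ_mul, Nat.add_sub_cancel, ih]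
      by_cases hjk : j = k
      · subst hjk; push_cast [factorial_succ, pow_succ]; simp only [↓reduceIte]; ring
      · simp [hjk]

theorem integral_sum_mul_physHermite_sq (s : Finset ℕ) (c : ℕ → ℝ) :
    ∫ x, (∑ k ∈ s, c k * physHermite k x) ^ 2 * exp (-x ^ 2) =
      ∑ k ∈ s, c k ^ 2 * (2 ^ k * k ! * √π) := by
  have hexpand : ∀ x, (∑ k ∈ s, c k * physHermite k x) ^ 2 * exp (-x ^ 2) =
      ∑ k ∈ s, ∑ l ∈ s, c k * c l * (physHermite k x * physHermite l x * exp (-x ^ 2)) := by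
    intro x
    simp_rw [sq, sum_mul_sum, sum_mul]
    exact sum_congr rfl fun k _ => sum_congr rfl fun l _ => by ring
  have hint : ∀ k l, Integrable fun x =>
      c k * c l * (physHermite k x * physHermite l x * exp (-x ^ 2)) :=
    fun k l => (integrable_physHermite_mul_physHermite_mul_exp k l).const_mul _
  simp_rw [hexpand]
  rw [integral_finsetSum _ fun k _ => integrable_finsetSum _ fun l _ => hint k l]
  refine sum_congr rfl fun k hk => ?_
  rw [integral_finsetSum _ fun l _ => hint k l]
  simp_rw [integral_const_mul, integral_physHermite_mul_physHermite]
  simp [hk, sq]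

theorem hermiteFn_sq (n : ℕ) (x : ℝ) :
    hermiteFn n x ^ 2 = (2 ^ n * n ! * √π)⁻¹ * (physHermite n x ^ 2 * exp (-x ^ 2)) := by
  have hc : 0 ≤ (2 : ℝ) ^ n * n ! * √π := by positivity
  have hnorm : ((2 ^ n * n ! * √π) ^ (-(1 : ℝ) / 2)) ^ 2 = (2 ^ n * n ! * √π)⁻¹ := by
    rw [← rpow_natCast, ← rpow_mul hc]; norm_num [rpow_neg_one]
  have hgauss : exp (-x ^ 2 / 2) ^ 2 = exp (-x ^ 2) := by rw [← exp_nat_mul]; ring_nf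
  rw [hermiteFn, mul_pow, mul_pow, hnorm, hgauss, mul_assoc]

theorem integral_physHermite_sq_mul_exp_neg_sub_sq (n : ℕ) (a : ℝ) :
    ∫ x, physHermite n x ^ 2 * exp (-(x - a) ^ 2) =
      ∑ k ∈ range (n + 1), (n.choose k * (2 * a) ^ (n - k)) ^ 2 * (2 ^ k * k ! * √π) := by
  rw [← integral_add_right_eq_self _ a]
  simp_rw [add_sub_cancel_right, physHermite_add]
  exact integral_sum_mul_physHermite_sq _ fun k => n.choose k * (2 * a) ^ (n - k)

theorem integral_exp_mul_hermiteFn_sq (n : ℕ) (a : ℝ) :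
    ∫ x, exp (2 * a * x) * hermiteFn n x ^ 2 =
      exp (a ^ 2) * ∑ j ∈ range (n + 1), n.choose j * (2 * a ^ 2) ^ j / j ! := by
  have hpt : ∀ x, exp (2 * a * x) * hermiteFn n x ^ 2 = (2 ^ n * n ! * √π)⁻¹ * exp (a ^ 2) *
      (physHermite n x ^ 2 * exp (-(x - a) ^ 2)) := by
    intro x
    rw [hermiteFn_sq, show -(x - a) ^ 2 = 2 * a * x + -x ^ 2 - a ^ 2 by ring, exp_sub, exp_add]
    field_simp
  simp_rw [hpt]
  rw [integral_const_mul, integral_physHermite_sq_mul_exp_neg_sub_sq,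
    ← sum_range_reflect (δ := ℝ) _ (n + 1), mul_sum, mul_sum]
  refine sum_congr rfl fun j hj => ?_
  have hjn : j ≤ n := Nat.lt_succ_iff.mp (mem_range.mp hj)
  rw [Nat.add_sub_cancel, Nat.sub_sub_self hjn, Nat.choose_symm hjn]
  have hfact : (n.choose j : ℝ) * j ! * (n - j)! = n ! := by
    exact_mod_cast Nat.choose_mul_factorial_mul_factorial hjn
  have hpow : (2 : ℝ) ^ n = 2 ^ j * 2 ^ (n - j) := by rw [← pow_add, Nat.add_sub_cancel' hjn]
  rw [← hfact, hpow]
  field_simp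
  ring

theorem sum_range_choose_eq_choose_succ (N j : ℕ) :
    ∑ n ∈ range N, n.choose j = N.choose (j + 1) := by
  induction N with
  | zero => simp
  | succ N ih => rw [sum_range_succ, ih, Nat.choose_succ_succ' N j, add_comm]

theorem factorial_two_mul_add_one_le (j : ℕ) : (2 * j + 1)! ≤ 4 ^ j * (j ! * (j + 1)!) := by
  have h := Nat.choose_mul_factorial_mul_factorial (show j ≤ 2 * j + 1 by omega)
  rw [show 2 * j + 1 - j = j + 1 by omega, mul_assoc] at h
  rw [← h]
  exact Nat.mul_le_mul_right _ (Nat.choose_middle_le_pow j)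

theorem sum_range_pow_odd_div_factorial_le_exp {z : ℝ} (hz : 0 ≤ z) (N : ℕ) :
    ∑ j ∈ range N, z ^ (2 * j + 1) / (2 * j + 1)! ≤ exp z := by
  rw [← sum_image (f := fun k => z ^ k / k !) (g := fun j => 2 * j + 1)
    fun _ _ _ _ h => by simpa using h]
  refine le_trans (sum_le_sum_of_subset_of_nonneg ?_ fun _ _ _ => by positivity)
    (sum_le_exp_of_nonneg hz (2 * N + 1))
  intro k hk
  simp only [mem_image, mem_range] at hk ⊢
  omega

theorem choose_succ_mul_pow_div_factorial_le (N j : ℕ) {x z : ℝ} (hx : 0 ≤ x) (hz : 0 < z)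
    (hxz : z ^ 2 = 4 * N * x) :
    N.choose (j + 1) * x ^ j / j ! ≤ N / z * (z ^ (2 * j + 1) / (2 * j + 1)!) := by
  have hfact : ((2 * j + 1)! : ℝ) ≤ 4 ^ j * (j ! * (j + 1)!) := by
    exact_mod_cast factorial_two_mul_add_one_le j
  calc (N.choose (j + 1) : ℝ) * x ^ j / j !
      ≤ (N : ℝ) ^ (j + 1) / (j + 1)! * x ^ j / j ! := by
        gcongr; exact Nat.choose_le_pow_div (j + 1) N
    _ = N * (4 * N * x) ^ j / (4 ^ j * (j ! * (j + 1)!)) := by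
        field_simp; ring
    _ ≤ N * (4 * N * x) ^ j / (2 * j + 1)! := by gcongr
    _ = N / z * (z ^ (2 * j + 1) / (2 * j + 1)!) := by
        rw [← hxz, ← pow_mul]; field_simp; ring

theorem sum_range_sum_choose_mul_pow_div_factorial_le (N : ℕ) {x z : ℝ} (hx : 0 ≤ x)
    (hz : 0 < z) (hxz : z ^ 2 = 4 * N * x) :
    ∑ n ∈ range N, ∑ j ∈ range (n + 1), n.choose j * x ^ j / j ! ≤ N / z * exp z :=
  calc ∑ n ∈ range N, ∑ j ∈ range (n + 1), (n.choose j : ℝ) * x ^ j / j !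
      ≤ ∑ n ∈ range N, ∑ j ∈ range N, (n.choose j : ℝ) * x ^ j / j ! := by
        gcongr with n hn
        exact mem_range.mp hn
    _ = ∑ j ∈ range N, N.choose (j + 1) * x ^ j / j ! := by
        rw [sum_comm]
        simp_rw [← sum_div, ← sum_mul]
        norm_cast
        simp_rw [sum_range_choose_eq_choose_succ]
    _ ≤ ∑ j ∈ range N, N / z * (z ^ (2 * j + 1) / (2 * j + 1)!) :=
        sum_le_sum fun j _ => choose_succ_mul_pow_div_factorial_le N j hx hz hxz
    _ ≤ N / z * exp z := by
        rw [← mul_sum]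
        gcongr
        exact sum_range_pow_odd_div_factorial_le_exp hz.le N

theorem exp_mul_sum_integral_exp_mul_hermiteFn_sq_le (N : ℕ) {s t m : ℝ} (hs : 1 ≤ s)
    (hN : (N : ℝ) = s ^ 6) (ht : t < 1) (hm : √2 * s ^ 3 * (1 - t * (s ^ 2)⁻¹) ≤ m) :
    exp (-2 * s⁻¹ * m) * ∑ n ∈ range N, ∫ x, exp (2 * s⁻¹ * x) * hermiteFn n x ^ 2 ≤
      exp 4 * s ^ 4 := by
  have hs0 : 0 < s := by linarith
  have hsqrt2 : 1 ≤ √2 ∧ √2 ≤ 3 / 2 := by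
    constructor <;> nlinarith [sq_sqrt (show (0 : ℝ) ≤ 2 by norm_num), sqrt_nonneg 2]
  set z := 2 * √2 * s ^ 2 with hz_def
  have hz : 0 < z := by positivity
  have hxz : z ^ 2 = 4 * N * (2 * s⁻¹ ^ 2) := by
    rw [hN, hz_def, mul_pow, mul_pow, sq_sqrt (by norm_num)]; field_simp; ring
  have hsum := sum_range_sum_choose_mul_pow_div_factorial_le N (by positivity) hz hxz
  have hexponent : -2 * s⁻¹ * m + s⁻¹ ^ 2 + z ≤ 4 := by
    have hinv : s⁻¹ ^ 2 ≤ 1 := pow_le_one₀ (by positivity) (inv_le_one_of_one_le₀ hs)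
    have ht' : √2 * t ≤ √2 := by nlinarith
    have hm' := mul_le_mul_of_nonneg_left hm (show 0 ≤ 2 * s⁻¹ by positivity)
    have hz_eq : 2 * s⁻¹ * (√2 * s ^ 3 * (1 - t * (s ^ 2)⁻¹)) = z - 2 * √2 * t := by
      rw [hz_def]; field_simp
    linarith
  have hNz : N / z ≤ s ^ 4 := by
    rw [div_le_iff₀ hz, hN, hz_def]
    nlinarith [pow_pos hs0 6]
  simp_rw [integral_exp_mul_hermiteFn_sq, inv_pow, ← mul_sum]
  calc exp (-2 * s⁻¹ * m) * (exp ((s ^ 2)⁻¹) * ∑ n ∈ range N, ∑ j ∈ range (n + 1),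
        (n.choose j : ℝ) * (2 * (s ^ 2)⁻¹) ^ j / j !)
      ≤ exp (-2 * s⁻¹ * m) * (exp ((s ^ 2)⁻¹) * (N / z * exp z)) := by
        gcongr; simpa using hsum
    _ = exp (-2 * s⁻¹ * m + s⁻¹ ^ 2 + z) * (N / z) := by
        rw [exp_add, exp_add, inv_pow]; ring
    _ ≤ exp 4 * s ^ 4 := by gcongr

theorem stmt7 :
    ∃ (c : ℝ) (n₀ : ℕ), 0 < c ∧ 0 < n₀ ∧
      ∀ (N : ℕ) (t m : ℝ), n₀ ≤ N → 0 < t → t < 1 →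
        Real.sqrt (2 * N) * (1 - t * (N : ℝ) ^ (-(1 : ℝ) / 3)) ≤ m →
        Real.exp (-2 * (N : ℝ) ^ (-(1 : ℝ) / 6) * m) *
            ∑ n ∈ Finset.range N,
              ∫ x : ℝ, Real.exp (2 * (N : ℝ) ^ (-(1 : ℝ) / 6) * x) * hermiteFn n x ^ 2 ≤
          c * (N : ℝ) ^ ((2 : ℝ) / 3) := by
  refine ⟨exp 4, 1, exp_pos 4, one_pos, fun N t m hN _ ht hm => ?_⟩
  -- With `s = N^(1/6)` every power of `N` in the statement is an integer power of `s`.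
  have hN0 : (0 : ℝ) ≤ N := N.cast_nonneg
  set s := (N : ℝ) ^ ((1 : ℝ) / 6)
  have hs : 1 ≤ s := one_le_rpow (by exact_mod_cast hN) (by norm_num)
  have hpow : ∀ k : ℤ, (N : ℝ) ^ ((k : ℝ) / 6) = s ^ k := fun k => by
    rw [← rpow_intCast, ← rpow_mul hN0]; ring_nf
  have h6 : (N : ℝ) = s ^ 6 := by simpa using hpow 6
  have hsqrt : √(2 * N) = √2 * s ^ 3 := by
    rw [h6, sqrt_mul zero_le_two, show s ^ 6 = (s ^ 3) ^ 2 by ring, sqrt_sq (by positivity)]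
  rw [show (N : ℝ) ^ (-(1 : ℝ) / 6) = s⁻¹ by simpa using hpow (-1),
    show (N : ℝ) ^ ((2 : ℝ) / 3) = s ^ 4 by
      simpa [show (4 : ℝ) / 6 = 2 / 3 by norm_num] using hpow 4]
  rw [show (N : ℝ) ^ (-(1 : ℝ) / 3) = (s ^ 2)⁻¹ by
    simpa [show (-2 : ℝ) / 6 = -1 / 3 by norm_num] using hpow (-2), hsqrt] at hm
  exact exp_mul_sum_integral_exp_mul_hermiteFn_sq_le N hs h6 ht hm
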